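/- If a rooted binary tree Y' is obtained from a rooted binary tree Y by the inverse chain rotation rot(w, [u-v]) where [u-v] is a left chain and, in Y', the vertex w has no right child, then L_{Y'} = L_Y + 1 and R_{Y'} = R_Y − 1; if instead w has a right child in Y' (i.e., the former right subtree of w was nonempty), then L_{Y'} = L_Y and R_{Y'} = R_Y. Here L_Y and R_Y denote the numbers of maximal left chains and maximal right chains of Y. -/

import Mathlib

/-- Rooted binary trees with vertices labeled by `α`: each vertex has an optional
left child and an optional right child; `nil` denotes the absent (empty) tree. -/
inductive BT (α : Type) : Type
  | nil : BT α
  | node : BT α → α → BT α → BT α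

namespace BT

variable {α : Type}

/-- The number of vertices of a tree. -/
def size : BT α → ℕ
  | nil => 0
  | node l _ r => size l + size r + 1

/-- The in-order (infix) traversal sequence of the labels of a tree:
left subtree first, then the root, then the right subtree. -/
def inorder : BT α → List α
  | nil => []
  | node l x r => inorder l ++ x :: inorder r

/-- The number of vertices of the tree having a (non-null) right child. -/
def rightChildCount : BT α → ℕ
  | nil => 0
  | node l _ nil => rightChildCount l
  | node l _ (node rl y rr) => rightChildCount l + rightChildCount (node rl y rr) + 1

/-- The number of vertices of the tree having a (non-null) left child. -/
def leftChildCount : BT α → ℕ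
  | nil => 0
  | node nil _ r => leftChildCount r
  | node (node ll y lr) _ r => leftChildCount (node ll y lr) + leftChildCount r + 1

/-- `L T`: the number of maximal left chains of `T`.  A left chain is a sequence of
vertices each linked to the next by a left-child pointer (a single vertex is a chain);
a maximal left chain is one not contained in any other left chain.  Each maximal left
chain is uniquely determined by its topmost vertex, which is either the root of the
tree or a right child of some vertex; moreover the maximal left chain headed by the
root of a nonempty left subtree `l` merges with its parent, which yields the
recursion below. -/
def L : BT α → ℕ
  | nil => 0
  | node nil _ r => 1 + L r
  | node (node ll y lr) _ r => L (node ll y lr) + L r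

/-- `R T`: the number of maximal right chains of `T` (mirror image of `L`). -/
def R : BT α → ℕ
  | nil => 0
  | node l _ nil => R l + 1
  | node l _ (node rl y rr) => R l + R (node rl y rr)

/-- The complete left chain on `n` vertices: the tree in which all `n` vertices are
linked by left-child pointers. -/
def leftChain : ℕ → BT Unit
  | 0 => nil
  | n + 1 => node (leftChain n) () nil

/-- The complete right chain on `n` vertices: the tree in which all `n` vertices are
linked by right-child pointers. -/
def rightChain : ℕ → BT Unit
  | 0 => nil
  | n + 1 => node nil () (rightChain n)

/-- `SpliceL A w U V lv` captures the local effect of the direct chain rotation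
`rot([u-v], w)` for a **left** chain `[u-v]`: here `U` is the subtree rooted at `u`
(`u` being the right child of `w`), `A` is the left subtree of `w` and `w` is its
label, `[u-v]` is the left chain going from `u` down (along left-child pointers) to
`v` inside `U`, `lv` is the former left subtree of `v`, and `V` is the tree replacing
the subtree `node A w U` rooted at `w`: the vertex `u` takes the place of `w`, `w`
becomes the left child of `v`, and the former left subtree `lv` of `v` (if any)
becomes the right subtree of `w`.  The chain `[u-v]` is maximal iff `lv = nil`. -/
inductive SpliceL (A : BT α) (w : α) : BT α → BT α → BT α → Prop
  | base (lv rv : BT α) (v : α) :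
      SpliceL A w (node lv v rv) (node (node A w lv) v rv) lv
  | step {lu lu' lv : BT α} (c : α) (ru : BT α) :
      SpliceL A w lu lu' lv → SpliceL A w (node lu c ru) (node lu' c ru) lv

/-- `SpliceR A w U V rv`: mirror image of `SpliceL`, i.e. the local effect of the
direct chain rotation `rot([u-v], w)` for a **right** chain `[u-v]`: `U` is the
subtree rooted at `u` (`u` being the left child of `w`), `A` is the right subtree of
`w`, `[u-v]` is the right chain from `u` down to `v` inside `U`, `rv` is the former
right subtree of `v`, and `V` replaces the subtree `node U w A` rooted at `w`: `u`
takes the place of `w`, `w` becomes the right child of `v`, and the former right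
subtree `rv` of `v` (if any) becomes the left subtree of `w`.
The chain `[u-v]` is maximal iff `rv = nil`. -/
inductive SpliceR (A : BT α) (w : α) : BT α → BT α → BT α → Prop
  | base (lv rv : BT α) (v : α) :
      SpliceR A w (node lv v rv) (node lv v (node rv w A)) rv
  | step {ru ru' rv : BT α} (lu : BT α) (c : α) :
      SpliceR A w ru ru' rv → SpliceR A w (node lu c ru) (node lu c ru') rv

/-- `Ctx Y Y' W W'`: the tree `Y'` is obtained from `Y` by replacing one occurrence
of the subtree `W`, rooted at some vertex of `Y` (or `Y` itself), by the tree `W'`. -/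
inductive Ctx : BT α → BT α → BT α → BT α → Prop
  | refl (W W' : BT α) : Ctx W W' W W'
  | left {l l' W W' : BT α} (x : α) (r : BT α) :
      Ctx l l' W W' → Ctx (node l x r) (node l' x r) W W'
  | right {r r' W W' : BT α} (l : BT α) (x : α) :
      Ctx r r' W W' → Ctx (node l x r) (node l x r') W W'

/-- `Y'` is obtained from `Y` by one **direct** chain rotation `rot([u-v], w)`,
performed either on a left chain or (symmetrically) on a right chain, at an arbitrary
vertex `w` of `Y`. -/
def DirectRot (Y Y' : BT α) : Prop :=
  (∃ A w U V lv, SpliceL A w U V lv ∧ Ctx Y Y' (node A w U) V) ∨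
  (∃ A w U V rv, SpliceR A w U V rv ∧ Ctx Y Y' (node U w A) V)

/-- `IChainL A w B X X'` captures the data of the inverse chain rotation
`rot(w, [u-v])` for a **left** chain `[u-v]`: `X` is the subtree rooted at `u`,
`[u-v]` is the left chain from `u` down to `v` inside `X`, and the vertex `w` (with
label `w`, left subtree `A` and right subtree `B`) is the left child of `v`; `X'` is
`X` with the left child `w` of `v` replaced by `B` (the former right subtree of `w`
becomes the left subtree of `v`).  The rotation replaces the subtree `X` by
`node A w X'`: `w` takes the place of `u` and `u` becomes the right child of `w`. -/
inductive IChainL (A : BT α) (w : α) (B : BT α) : BT α → BT α → Prop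
  | base (v : α) (rv : BT α) :
      IChainL A w B (node (node A w B) v rv) (node B v rv)
  | step {lu lu' : BT α} (c : α) (ru : BT α) :
      IChainL A w B lu lu' → IChainL A w B (node lu c ru) (node lu' c ru)

/-- `IChainR B w A X X'`: mirror image of `IChainL`, for the inverse chain rotation
`rot(w, [u-v])` on a **right** chain `[u-v]`: `X` is the subtree rooted at `u`, the
vertex `w` (with left subtree `B` and right subtree `A`) is the right child of `v`;
`X'` is `X` with the right child `w` of `v` replaced by `B`.  The rotation replaces
`X` by `node X' w A`: `w` takes the place of `u` and `u` becomes the left child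
of `w`. -/
inductive IChainR (B : BT α) (w : α) (A : BT α) : BT α → BT α → Prop
  | base (v : α) (lv : BT α) :
      IChainR B w A (node lv v (node B w A)) (node lv v B)
  | step {ru ru' : BT α} (lu : BT α) (c : α) :
      IChainR B w A ru ru' → IChainR B w A (node lu c ru) (node lu c ru')

/-- `Y'` is obtained from `Y` by one **inverse** chain rotation `rot(w, [u-v])`,
performed either on a left chain or (symmetrically) on a right chain, anywhere
in `Y`. -/
def InvRot (Y Y' : BT α) : Prop :=
  (∃ A w B X X', IChainL A w B X X' ∧ Ctx Y Y' X (node A w X')) ∨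
  (∃ B w A X X', IChainR B w A X X' ∧ Ctx Y Y' X (node X' w A))

/-- One chain rotation (c-rotation), direct or inverse. -/
def CStep (Y Y' : BT α) : Prop := DirectRot Y Y' ∨ InvRot Y Y'

/-- `ReachIn k S T`: `S` can be transformed into `T` by a sequence of exactly `k`
chain rotations (each direct or inverse). -/
def ReachIn : ℕ → BT α → BT α → Prop
  | 0 => fun S T => S = T
  | k + 1 => fun S T => ∃ Y, CStep S Y ∧ ReachIn k Y T

/-- `DReachIn k S T`: `S` can be transformed into `T` by a sequence of exactly `k`
**direct** chain rotations. -/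
def DReachIn : ℕ → BT α → BT α → Prop
  | 0 => fun S T => S = T
  | k + 1 => fun S T => ∃ Y, DirectRot S Y ∧ DReachIn k Y T

/-- The chain distance `C(S,T)`: the minimum number of chain rotations (direct or
inverse) needed to transform `S` into `T`. -/
noncomputable def chainDist (S T : BT α) : ℕ := sInf {k | ReachIn k S T}

end BT

/-! Counting each maximal left chain by its lowest vertex, `L T` is the number of vertices
without a left child, and `R T` the number of vertices without a right child.  The rotation
`rot(w, [u-v])` changes the children of only two vertices: `v` trades its left child `w` for
the old right subtree `B` of `w`, and `w` trades `B` for its new right child `u`.  So if `B`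
is empty, exactly one vertex (`v`) loses its left child and one (`w`) gains a right child;
if `B` is nonempty, no vertex changes whether it has a left or a right child. -/

namespace BT

variable {α : Type}

open scoped Classical

@[simp]
theorem node_ne_nil (l : BT α) (x : α) (r : BT α) : node l x r ≠ nil := nofun

theorem L_node (l : BT α) (x : α) (r : BT α) :
    (node l x r).L = l.L + r.L + if l = nil then 1 else 0 := by
  cases l <;> simp [L, add_comm]

theorem R_node (l : BT α) (x : α) (r : BT α) :
    (node l x r).R = l.R + r.R + if r = nil then 1 else 0 := by
  cases r <;> simp [R]

theorem Ctx.swap {Y Y' W W' : BT α} (h : Ctx Y Y' W W') : Ctx Y' Y W' W := by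
  induction h with
  | refl => exact .refl _ _
  | left x r _ ih => exact .left x r ih
  | right l x _ ih => exact .right l x ih

theorem Ctx.ne_nil {Y Y' W W' : BT α} (h : Ctx Y Y' W W') (hW : W ≠ nil) : Y ≠ nil := by
  cases h
  · exact hW
  all_goals exact node_ne_nil _ _ _

theorem Ctx.L_add_eq {Y Y' W W' : BT α} (h : Ctx Y Y' W W') (hW : W ≠ nil) (hW' : W' ≠ nil) :
    Y.L + W'.L = Y'.L + W.L := by
  induction h with
  | refl => omega
  | left x r hctx ih =>
    have := ih hW hW'
    simp only [L_node, hctx.ne_nil hW, hctx.swap.ne_nil hW', if_false]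
    omega
  | right l x _ ih =>
    have := ih hW hW'
    simp only [L_node]
    omega

theorem Ctx.R_add_eq {Y Y' W W' : BT α} (h : Ctx Y Y' W W') (hW : W ≠ nil) (hW' : W' ≠ nil) :
    Y.R + W'.R = Y'.R + W.R := by
  induction h with
  | refl => omega
  | left x r _ ih =>
    have := ih hW hW'
    simp only [R_node]
    omega
  | right l x hctx ih =>
    have := ih hW hW'
    simp only [R_node, hctx.ne_nil hW, hctx.swap.ne_nil hW', if_false]
    omega

section IChainL

variable {A B X X' : BT α} {w : α}

theorem IChainL.ne_nil (h : IChainL A w B X X') : X ≠ nil ∧ X' ≠ nil := by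
  cases h <;> simp

theorem IChainL.L_rotate (h : IChainL A w B X X') :
    (node A w X').L = X.L + if B = nil then 1 else 0 := by
  induction h with
  | base v rv =>
    simp only [L_node, node_ne_nil, if_false]
    omega
  | step c ru hch ih =>
    simp only [L_node, hch.ne_nil.1, hch.ne_nil.2, if_false] at ih ⊢
    omega

theorem IChainL.R_rotate (h : IChainL A w B X X') :
    (node A w X').R + (if B = nil then 1 else 0) = X.R := by
  induction h with
  | base v rv =>
    simp only [R_node, node_ne_nil, if_false]
    omega
  | step c ru hch ih =>
    simp only [R_node, node_ne_nil, hch.ne_nil.2, if_false] at ih ⊢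
    omega

end IChainL

end BT

open BT

/-- suppose `Y'` is obtained from `Y` by the inverse chain rotation
`rot(w, [u-v])` where `[u-v]` is a left chain (here `B` is the former right subtree of
the vertex `w`, i.e. its right subtree in `Y`).  If `w` has no right child (`B = nil`)
then `L_{Y'} = L_Y + 1` and `R_{Y'} = R_Y − 1`; if instead the former right subtree of
`w` was nonempty (`B ≠ nil`) then `L_{Y'} = L_Y` and `R_{Y'} = R_Y`. -/
theorem invRot_chain_counts (Y Y' : BT Unit) (A : BT Unit) (w : Unit)
    (B X X' : BT Unit) (h : IChainL A w B X X') (hc : Ctx Y Y' X (BT.node A w X')) :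
    (B = BT.nil → (Y'.L : ℤ) = (Y.L : ℤ) + 1 ∧ (Y'.R : ℤ) = (Y.R : ℤ) - 1) ∧
    (B ≠ BT.nil → Y'.L = Y.L ∧ Y'.R = Y.R) := by
  have hL := hc.L_add_eq h.ne_nil.1 (node_ne_nil _ _ _)
  have hR := hc.R_add_eq h.ne_nil.1 (node_ne_nil _ _ _)
  rw [h.L_rotate] at hL
  rw [← h.R_rotate] at hR
  constructor
  · intro hB
    rw [if_pos hB] at hL hR
    omega
  · intro hB
    rw [if_neg hB] at hL hR
    omega
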